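/- (Energy comparison in Proposition 'electricity') Let G = (V,E) be a finite graph, p ∈ (0,1/2], μ the Bernoulli(p) product measure on {0,1}^V conditioned on at least one particle. For a configuration ω (identified with its set of particles) define F_ω(u) = f(ω ∪ {u}). Then ½ Σ_{ω∈Ω₊} p·μ(ω) Σ_{(u,v)∈E⃗} (F_ω(v) − F_ω(u))² ≤ 4·D(f), where D is the CBSEP Dirichlet form. -/

import Mathlib

/-!
Fix an edge `{x, y}`. Configurations with both endpoints occupied contribute nothing to the
gradient term. Those with both endpoints empty give an exchange term; since
`p μ(ω) = (1 - p) μ(ω ∪ {x})`, half of it can be charged to `ω ∪ {x}` and half to `ω ∪ {y}`,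
which have exactly one occupied endpoint, like the configurations carrying a branching term.
On such a configuration `σ` everything is expressed through the three values of `f` on the
non-empty states of the edge: `A = f σ`, `B` (particle moved across the edge) and `C` (both
sites filled). The required bound `p (C - A)² + (1 - p)/2 (B - A)² ≤ 4 Var` is then elementary
for `p ≤ 1/2` once the variance with weights `(1 - p, 1 - p, p)/(2 - p)` is written as a
weighted sum of pairwise squared differences.
-/

set_option linter.unusedSectionVars false

open Finset

variable {V : Type*} [Fintype V] [DecidableEq V]

/-- Number of particles of a configuration. -/
def Np (ω : V → Bool) : ℕ := (Finset.univ.filter (fun x => ω x = true)).card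

/-- Configurations with at least one particle. -/
def OmegaPlus (V : Type*) [Fintype V] [DecidableEq V] : Finset (V → Bool) :=
  Finset.univ.filter (fun ω => 0 < Np ω)

/-- Bernoulli(p) product weight. -/
def bern (p : ℝ) (ω : V → Bool) : ℝ := ∏ x, if ω x = true then p else 1 - p

/-- The measure `π` conditioned on at least one particle (weight on `OmegaPlus`). -/
noncomputable def mu (p : ℝ) (ω : V → Bool) : ℝ := bern p ω / (1 - (1 - p) ^ Fintype.card V)

/-- Fill vertex `x` with a particle. -/
def fill (ω : V → Bool) (x : V) : V → Bool := Function.update ω x true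

/-- Flip the state at vertex `x`. -/
def flipAt (ω : V → Bool) (x : V) : V → Bool := Function.update ω x (!ω x)

/-- Variance of `f` under resampling the states at `x, y` from `π_x ⊗ π_y`
conditioned on the edge being non-empty. -/
noncomputable def edgeVar (p : ℝ) (f : (V → Bool) → ℝ) (x y : V) (ω : V → Bool) : ℝ :=
  let u : Bool → Bool → ℝ := fun a b => f (Function.update (Function.update ω x a) y b)
  let m : ℝ := ((1 - p) / (2 - p)) * u true false + ((1 - p) / (2 - p)) * u false true +
      (p / (2 - p)) * u true true
  ((1 - p) / (2 - p)) * (u true false - m) ^ 2 + ((1 - p) / (2 - p)) * (u false true - m) ^ 2 +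
    (p / (2 - p)) * (u true true - m) ^ 2

/-- The CBSEP Dirichlet form `D(f) = Σ_{e∈E} μ(𝟙_{E_e} Var_e(f | E_e))`,
written as half the sum over oriented edges. -/
noncomputable def dirichlet (G : SimpleGraph V) [DecidableRel G.Adj] (p : ℝ)
    (f : (V → Bool) → ℝ) : ℝ :=
  (1 / 2) * ∑ x, ∑ y ∈ G.neighborFinset x,
    ∑ ω ∈ (OmegaPlus V).filter (fun ω => ω x = true ∨ ω y = true), mu p ω * edgeVar p f x y ω
noncomputable def threePointVar (p A B C : ℝ) : ℝ :=
  let m : ℝ := ((1 - p) / (2 - p)) * A + ((1 - p) / (2 - p)) * B + (p / (2 - p)) * C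
  ((1 - p) / (2 - p)) * (A - m) ^ 2 + ((1 - p) / (2 - p)) * (B - m) ^ 2 +
    (p / (2 - p)) * (C - m) ^ 2

lemma edgeVar_eq_threePointVar (p : ℝ) (f : (V → Bool) → ℝ) (x y : V) (ω : V → Bool) :
    edgeVar p f x y ω = threePointVar p (f (Function.update (Function.update ω x true) y false))
      (f (Function.update (Function.update ω x false) y true))
      (f (Function.update (Function.update ω x true) y true)) := rfl

lemma threePointVar_eq {p : ℝ} (hp : p ≠ 2) (A B C : ℝ) :
    threePointVar p A B C =
      ((1 - p) ^ 2 * (A - B) ^ 2 + p * (1 - p) * ((A - C) ^ 2 + (B - C) ^ 2)) / (2 - p) ^ 2 := by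
  have : 2 - p ≠ 0 := sub_ne_zero.mpr (Ne.symm hp)
  unfold threePointVar
  field_simp
  ring

lemma threePointVar_comm {p : ℝ} (hp : p ≠ 2) (A B C : ℝ) :
    threePointVar p A B C = threePointVar p B A C := by
  rw [threePointVar_eq hp, threePointVar_eq hp]
  ring

lemma threePointVar_nonneg {p : ℝ} (hp0 : 0 ≤ p) (hp1 : p ≤ 1) (A B C : ℝ) :
    0 ≤ threePointVar p A B C := by
  rw [threePointVar_eq (by linarith)]
  have : 0 ≤ 1 - p := by linarith
  positivity

lemma le_four_mul_threePointVar {p : ℝ} (hp0 : 0 ≤ p) (hp : p ≤ 1 / 2) (A B C : ℝ) :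
    p * (C - A) ^ 2 + (1 - p) / 2 * (B - A) ^ 2 ≤ 4 * threePointVar p A B C := by
  rw [threePointVar_eq (by linarith), mul_div_assoc', le_div_iff₀ (pow_pos (by linarith) 2)]
  -- with `a = A - B`, `b = B - C`, use `(a + b)² ≤ 2a² + 2b²` on the `p³ (A - C)²` deficit
  have hab : 0 ≤ p ^ 3 * (A - 2 * B + C) ^ 2 := by positivity
  have ha : 0 ≤ (4 * (1 - 2 * p) + 3 * p ^ 2 * (1 - p)) * (A - B) ^ 2 := by
    have : 0 ≤ 1 - 2 * p := by linarith
    have : 0 ≤ 1 - p := by linarith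
    positivity
  have hb : 0 ≤ p * (2 * (1 - p) - p ^ 2) * (B - C) ^ 2 := by
    have : 0 ≤ 2 * (1 - p) - p ^ 2 := by nlinarith
    positivity
  linarith

lemma edgeVar_comm {p : ℝ} (hp : p ≠ 2) (f : (V → Bool) → ℝ) {x y : V} (hxy : x ≠ y)
    (ω : V → Bool) : edgeVar p f y x ω = edgeVar p f x y ω := by
  simp only [edgeVar_eq_threePointVar, Function.update_comm hxy.symm]
  exact threePointVar_comm hp _ _ _

lemma edgeVar_nonneg {p : ℝ} (hp0 : 0 ≤ p) (hp1 : p ≤ 1) (f : (V → Bool) → ℝ) (x y : V)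
    (ω : V → Bool) : 0 ≤ edgeVar p f x y ω :=
  threePointVar_nonneg hp0 hp1 _ _ _

lemma bern_update_mul (p : ℝ) (ω : V → Bool) (x : V) (b : Bool) :
    bern p (Function.update ω x b) * (if ω x = true then p else 1 - p) =
      (if b = true then p else 1 - p) * bern p ω := by
  have key : ∀ σ : V → Bool, bern p σ =
      (if σ x = true then p else 1 - p) * ∏ v ∈ univ \ {x}, if σ v = true then p else 1 - p := by
    intro σ
    rw [bern, ← mul_prod_erase univ _ (mem_univ x), sdiff_singleton_eq_erase]
  rw [key, key ω, Function.update_self]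
  have : ∀ v ∈ univ \ {x}, (if Function.update ω x b v = true then p else 1 - p) =
      if ω v = true then p else 1 - p := fun v hv => by
    rw [Function.update_of_ne (by simpa using hv)]
  rw [prod_congr rfl this]
  ring

lemma mul_mu_eq_mul_mu_fill (p : ℝ) {ω : V → Bool} {x : V} (hx : ω x = false) :
    p * mu p ω = (1 - p) * mu p (fill ω x) := by
  have := bern_update_mul p ω x true
  simp only [hx] at this
  simp only [mu, fill, mul_div_assoc']
  congr 1
  simpa [mul_comm] using this.symm

lemma mu_nonneg {p : ℝ} (hp0 : 0 ≤ p) (hp1 : p ≤ 1) (ω : V → Bool) : 0 ≤ mu p ω := by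
  have h1 : 0 ≤ 1 - (1 - p) ^ Fintype.card V :=
    sub_nonneg.mpr (pow_le_one₀ (by linarith) (by linarith))
  exact div_nonneg (prod_nonneg fun v _ => by split <;> linarith) h1

lemma fill_eq_self {ω : V → Bool} {x : V} (hx : ω x = true) : fill ω x = ω :=
  Function.update_eq_self_iff.mpr hx.symm

lemma mem_OmegaPlus_of_eq_true {ω : V → Bool} {x : V} (hx : ω x = true) : ω ∈ OmegaPlus V := by
  simp only [OmegaPlus, Np, mem_filter, mem_univ, true_and, card_pos]
  exact ⟨x, by simpa using hx⟩

lemma sum_eq_of_eq_zero_of_both_occupied {M : Type*} [AddCommMonoid M] (x y : V)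
    (g : (V → Bool) → M) (hg : ∀ ω, ω x = true → ω y = true → g ω = 0) :
    ∑ ω, g ω = ∑ ω ∈ univ.filter (fun ω => ω x = true ∧ ω y = false), g ω +
      ∑ ω ∈ univ.filter (fun ω => ω y = true ∧ ω x = false), g ω +
      ∑ ω ∈ univ.filter (fun ω => ω x = false ∧ ω y = false), g ω := by
  rw [← sum_fiberwise univ (fun ω => (ω x, ω y)) g]
  simp only [Fintype.sum_prod_type, Fintype.sum_bool, Prod.mk.injEq]
  rw [filter_congr (p := fun ω : V → Bool => ω x = false ∧ ω y = true) fun _ _ => and_comm]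
  rw [sum_eq_zero fun ω hω => hg ω (mem_filter.mp hω).2.1 (mem_filter.mp hω).2.2]
  abel

lemma sum_empty_site_eq_sum_occupied_site {M : Type*} [AddCommMonoid M] (x : V)
    {P : (V → Bool) → Prop} [DecidablePred P] (hP : ∀ ω b, P (Function.update ω x b) ↔ P ω)
    (g : (V → Bool) → M) :
    ∑ ω ∈ univ.filter (fun ω => ω x = false ∧ P ω), g ω =
      ∑ σ ∈ univ.filter (fun σ => σ x = true ∧ P σ), g (Function.update σ x false) := by
  refine sum_nbij' (fun ω => Function.update ω x true) (fun σ => Function.update σ x false)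
    ?_ ?_ ?_ ?_ ?_ <;> intro ω hω <;> obtain ⟨hx, hPω⟩ := (mem_filter.mp hω).2
  · simp [hP, hPω]
  · simp [hP, hPω]
  · simp [← hx]
  · simp [← hx]
  · simp [← hx]

lemma sum_both_empty_eq_sum_exchange (p : ℝ) (f : (V → Bool) → ℝ) {x y : V} (hxy : x ≠ y) :
    ∑ ω ∈ univ.filter (fun ω => ω x = false ∧ ω y = false),
        p * mu p ω * (f (fill ω y) - f (fill ω x)) ^ 2 =
      ∑ σ ∈ univ.filter (fun σ => σ x = true ∧ σ y = false),
        (1 - p) * mu p σ * (f (fill (Function.update σ x false) y) - f σ) ^ 2 := by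
  rw [sum_empty_site_eq_sum_occupied_site x (P := fun ω => ω y = false)
    (fun ω b => by rw [Function.update_of_ne hxy.symm])]
  refine sum_congr rfl fun σ hσ => ?_
  have hfill : fill (Function.update σ x false) x = σ := by
    rw [fill, Function.update_idem]
    exact fill_eq_self (mem_filter.mp hσ).2.1
  rw [mul_mu_eq_mul_mu_fill p (Function.update_self x false σ), hfill]

lemma gradient_add_exchange_le {p : ℝ} (hp0 : 0 < p) (hp : p ≤ 1 / 2) (f : (V → Bool) → ℝ)
    {x y : V} {σ : V → Bool} (hx : σ x = true) (hy : σ y = false) :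
    p * mu p σ * (f (fill σ y) - f (fill σ x)) ^ 2 +
        (1 - p) * mu p σ * (f (fill (Function.update σ x false) y) - f σ) ^ 2 / 2 ≤
      4 * (mu p σ * edgeVar p f x y σ) := by
  have hσx : Function.update σ x true = σ := fill_eq_self hx
  have hσy : Function.update σ y false = σ := Function.update_eq_self_iff.mpr hy.symm
  have key := le_four_mul_threePointVar hp0.le hp (f σ)
    (f (fill (Function.update σ x false) y)) (f (fill σ y))
  rw [edgeVar_eq_threePointVar, hσx, hσy]
  simp only [fill, hσx] at key ⊢
  have := mul_le_mul_of_nonneg_left key (mu_nonneg hp0.le (by linarith) σ)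
  linarith

lemma sum_gradient_le_edgeVar {p : ℝ} (hp0 : 0 < p) (hp : p ≤ 1 / 2) (f : (V → Bool) → ℝ)
    {x y : V} (hxy : x ≠ y) :
    ∑ ω ∈ OmegaPlus V, p * mu p ω * (f (fill ω y) - f (fill ω x)) ^ 2 ≤
      4 * ∑ ω ∈ (OmegaPlus V).filter (fun ω => ω x = true ∨ ω y = true),
        mu p ω * edgeVar p f x y ω := by
  have hμ : ∀ ω : V → Bool, 0 ≤ mu p ω := mu_nonneg hp0.le (by linarith)
  set T : V → V → (V → Bool) → ℝ := fun x y ω => p * mu p ω * (f (fill ω y) - f (fill ω x)) ^ 2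
  set X : V → V → (V → Bool) → ℝ := fun x y σ =>
    (1 - p) * mu p σ * (f (fill (Function.update σ x false) y) - f σ) ^ 2
  set R : (V → Bool) → ℝ := fun ω => mu p ω * edgeVar p f x y ω
  set sTF := univ.filter (fun σ : V → Bool => σ x = true ∧ σ y = false)
  set sFT := univ.filter (fun σ : V → Bool => σ y = true ∧ σ x = false)
  have hT : ∀ ω, T x y ω = T y x ω := fun ω => by simp only [T]; ring
  have hTT : ∀ ω, ω x = true → ω y = true → T x y ω = 0 := fun ω hx hy => by
    simp only [T, fill_eq_self hx, fill_eq_self hy]; ring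
  have hFF : ∑ ω ∈ univ.filter (fun ω => ω x = false ∧ ω y = false), T x y ω =
      (∑ σ ∈ sTF, X x y σ) / 2 + (∑ σ ∈ sFT, X y x σ) / 2 := by
    rw [← sum_both_empty_eq_sum_exchange p f hxy, ← sum_both_empty_eq_sum_exchange p f hxy.symm,
      filter_congr (p := fun ω : V → Bool => ω y = false ∧ ω x = false) fun _ _ => and_comm]
    rw [← add_div, ← sum_add_distrib, eq_div_iff two_ne_zero, sum_mul]
    exact sum_congr rfl fun ω _ => by simp only [T]; ring
  have hTF : ∀ σ ∈ sTF, T x y σ + X x y σ / 2 ≤ 4 * R σ := fun σ hσ =>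
    gradient_add_exchange_le hp0 hp f (mem_filter.mp hσ).2.1 (mem_filter.mp hσ).2.2
  have hFT : ∀ σ ∈ sFT, T x y σ + X y x σ / 2 ≤ 4 * R σ := fun σ hσ => by
    have := gradient_add_exchange_le hp0 hp f (mem_filter.mp hσ).2.1 (mem_filter.mp hσ).2.2
    rw [hT]
    rwa [edgeVar_comm (by linarith) f hxy] at this
  have hdisj : Disjoint sTF sFT := disjoint_filter.mpr fun σ _ h h' => by
    simp [h.1] at h'
  have hsub : sTF ∪ sFT ⊆ (OmegaPlus V).filter (fun ω => ω x = true ∨ ω y = true) := by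
    intro σ hσ
    rcases mem_union.mp hσ with h | h <;> obtain ⟨-, h1, -⟩ := mem_filter.mp h
    · exact mem_filter.mpr ⟨mem_OmegaPlus_of_eq_true h1, .inl h1⟩
    · exact mem_filter.mpr ⟨mem_OmegaPlus_of_eq_true h1, .inr h1⟩
  calc ∑ ω ∈ OmegaPlus V, T x y ω
      ≤ ∑ ω, T x y ω := sum_le_sum_of_subset_of_nonneg (subset_univ _)
        fun ω _ _ => mul_nonneg (mul_nonneg hp0.le (hμ ω)) (sq_nonneg _)
    _ = ∑ σ ∈ sTF, (T x y σ + X x y σ / 2) + ∑ σ ∈ sFT, (T x y σ + X y x σ / 2) := by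
        rw [sum_eq_of_eq_zero_of_both_occupied x y _ hTT, hFF, sum_add_distrib,
          sum_add_distrib, ← sum_div, ← sum_div]
        ring
    _ ≤ ∑ σ ∈ sTF ∪ sFT, 4 * R σ := by
        rw [sum_union hdisj]
        exact add_le_add (sum_le_sum hTF) (sum_le_sum hFT)
    _ ≤ 4 * ∑ ω ∈ (OmegaPlus V).filter (fun ω => ω x = true ∨ ω y = true), R ω := by
        rw [mul_sum]
        exact sum_le_sum_of_subset_of_nonneg hsub fun σ _ _ => mul_nonneg (by norm_num)
          (mul_nonneg (hμ σ) (edgeVar_nonneg hp0.le (by linarith) f x y σ))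

/-- Energy comparison: `½ Σ_{ω∈Ω₊} p·μ(ω) Σ_{(u,v)∈E⃗} (F_ω(v)-F_ω(u))² ≤ 4·D(f)`,
where `F_ω(u) = f(ω ∪ {u})`. -/
theorem stmt15 (G : SimpleGraph V) [DecidableRel G.Adj] (p : ℝ) (hp0 : 0 < p)
    (hp : p ≤ 1 / 2) (f : (V → Bool) → ℝ) :
    (1 / 2) * ∑ ω ∈ OmegaPlus V, p * mu p ω *
        (∑ u, ∑ v ∈ G.neighborFinset u, (f (fill ω v) - f (fill ω u)) ^ 2) ≤
      4 * dirichlet G p f := by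
  calc (1 / 2) * ∑ ω ∈ OmegaPlus V, p * mu p ω *
        (∑ u, ∑ v ∈ G.neighborFinset u, (f (fill ω v) - f (fill ω u)) ^ 2)
      = (1 / 2) * ∑ u, ∑ v ∈ G.neighborFinset u,
          ∑ ω ∈ OmegaPlus V, p * mu p ω * (f (fill ω v) - f (fill ω u)) ^ 2 := by
        simp only [mul_sum]
        rw [sum_comm]
        exact sum_congr rfl fun u _ => sum_comm
    _ ≤ (1 / 2) * ∑ u, ∑ v ∈ G.neighborFinset u,
          4 * ∑ ω ∈ (OmegaPlus V).filter (fun ω => ω u = true ∨ ω v = true),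
            mu p ω * edgeVar p f u v ω := by
        gcongr with u _ v hv
        exact sum_gradient_le_edgeVar hp0 hp f (G.ne_of_adj ((G.mem_neighborFinset u v).mp hv))
    _ = 4 * dirichlet G p f := by
        simp only [dirichlet, ← mul_sum]
        ring
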